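/- arXiv:2508.20076 — 5 statements merged into one kernel-verified Lean document; each statement's English description precedes it below -/
import Mathlib

section
/- Let Σ̂ ∈ ℝ^{p×p} be a positive semidefinite matrix, let V, V̂ ∈ ℝ^p, let J = {j : V_j ≠ 0}, let Δ = V̂ − V, and let λ > 0. Assume: (i) the basic inequality ΔᵀΣ̂Δ ≤ 2λ(‖V‖₁ − ‖V̂‖₁) + λ‖Δ‖₁ holds, and (ii) Σ̂ satisfies the compatibility condition for J with constant φ > 0. Then ‖Δ‖₁ ≤ 4λ/φ². -/
open Matrix Finset

theorem stmt2 {p : ℕ} (Shat : Matrix (Fin p) (Fin p) ℝ) (hpsd : Shat.PosSemidef)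
    (V Vhat : Fin p → ℝ)
    (J : Finset (Fin p)) (hJ : ∀ j, j ∈ J ↔ V j ≠ 0)
    (Δ : Fin p → ℝ) (hΔ : Δ = Vhat - V)
    (lam φ : ℝ) (hlam : 0 < lam) (hφ : 0 < φ)
    (hbasic : Δ ⬝ᵥ Shat.mulVec Δ ≤
      2 * lam * (∑ j, |V j| - ∑ j, |Vhat j|) + lam * ∑ j, |Δ j|)
    (hcompat : ∀ D : Fin p → ℝ, D ≠ 0 → ∑ j ∈ Jᶜ, |D j| ≤ 3 * ∑ j ∈ J, |D j| →
      (∑ j ∈ J, |D j|) ^ 2 ≤ (D ⬝ᵥ Shat.mulVec D) / φ ^ 2) :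
    ∑ j, |Δ j| ≤ 4 * lam / φ ^ 2 := by
  by_cases hΔ0 : Δ = 0
  · simp [hΔ0]
    positivity
  set a := ∑ j ∈ J, |Δ j| with ha
  set b := ∑ j ∈ Jᶜ, |Δ j| with hb
  set Q := Δ ⬝ᵥ Shat.mulVec Δ with hQdef
  have hQ0 : 0 ≤ Q := by simpa using hpsd.dotProduct_mulVec_nonneg Δ
  have hsplit : ∑ j, |Δ j| = a + b := (Finset.sum_add_sum_compl J _).symm
  have hVzero : ∀ j ∈ Jᶜ, V j = 0 := by
    intro j hj
    by_contra h
    exact (Finset.mem_compl.mp hj) ((hJ j).mpr h)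
  have hV1 : ∑ j, |V j| = ∑ j ∈ J, |V j| := by
    rw [← Finset.sum_add_sum_compl J fun j => |V j|]
    have : ∑ j ∈ Jᶜ, |V j| = 0 :=
      Finset.sum_eq_zero fun j hj => by simp [hVzero j hj]
    linarith
  have hV2 : ∑ j, |Vhat j| = ∑ j ∈ J, |Vhat j| + b := by
    rw [← Finset.sum_add_sum_compl J fun j => |Vhat j|]
    congr 1
    refine Finset.sum_congr rfl fun j hj => ?_
    have : Δ j = Vhat j := by simp [hΔ, hVzero j hj]
    rw [this]
  have hterm : ∑ j ∈ J, |V j| - ∑ j ∈ J, |Vhat j| ≤ a := by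
    rw [ha, ← Finset.sum_sub_distrib]
    refine Finset.sum_le_sum fun j hj => ?_
    have h1 : |V j| ≤ |Vhat j| + |Δ j| := by
      have : V j = Vhat j - Δ j := by simp [hΔ]
      rw [this]
      exact abs_sub _ _
    linarith
  have hdiff : ∑ j, |V j| - ∑ j, |Vhat j| ≤ a - b := by
    rw [hV1, hV2]; linarith
  have hkey : Q + lam * (a + b) ≤ 4 * lam * a := by
    rw [← hsplit]
    nlinarith [hbasic]
  have hba : b ≤ 3 * a := by nlinarith
  have hcomp : a ^ 2 ≤ Q / φ ^ 2 := hcompat Δ hΔ0 hba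
  have hQa : φ ^ 2 * a ^ 2 ≤ Q := by
    have h := (le_div_iff₀ (by positivity : (0:ℝ) < φ ^ 2)).mp hcomp
    nlinarith [h]
  have hmain : lam * (a + b) ≤ 4 * lam ^ 2 / φ ^ 2 := by
    have hφ2 : (0:ℝ) < φ ^ 2 := by positivity
    have h4 : 4 * lam * a - φ ^ 2 * a ^ 2 ≤ 4 * lam ^ 2 / φ ^ 2 := by
      rw [le_div_iff₀ hφ2]
      nlinarith [sq_nonneg (φ ^ 2 * a - 2 * lam)]
    linarith
  have heq : 4 * lam ^ 2 / φ ^ 2 = lam * (4 * lam / φ ^ 2) := by ring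
  rw [hsplit]
  exact le_of_mul_le_mul_left (heq ▸ hmain) hlam
end

section
/- Let V, V̂ ∈ ℝ^p, let J = {j : V_j ≠ 0} with |J| = s₀, let Δ = V̂ − V, and let λ > 0, φ > 0. Assume ‖Δ‖₁ ≤ 4s₀λ/φ². Define the first thresholded set Ĵ₀ = {j ∈ {1,…,p} : |V̂_j| > 4λ}. Then the number of false positives satisfies |Ĵ₀ \ J| ≤ s₀/φ². -/
open Finset

lemma card_mul_le_sum_abs {ι : Type*} [Fintype ι] (s : Finset ι) (x : ι → ℝ) {t : ℝ}
    (h : ∀ j ∈ s, t ≤ |x j|) : s.card * t ≤ ∑ j, |x j| :=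
  calc (s.card : ℝ) * t = ∑ _j ∈ s, t := by rw [sum_const, nsmul_eq_mul]
    _ ≤ ∑ j ∈ s, |x j| := sum_le_sum h
    _ ≤ ∑ j, |x j| := sum_le_univ_sum_of_nonneg fun _ => abs_nonneg _

theorem stmt3_general {p : ℕ} (V Vhat : Fin p → ℝ)
    (J : Finset (Fin p)) (hJ : ∀ j, j ∈ J ↔ V j ≠ 0)
    (s0 : ℕ)
    (Δ : Fin p → ℝ) (hΔ : Δ = Vhat - V)
    (lam φ : ℝ) (hlam : 0 < lam)
    (hΔ1 : ∑ j, |Δ j| ≤ 4 * s0 * lam / φ ^ 2)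
    (J0 : Finset (Fin p)) (hJ0 : ∀ j, j ∈ J0 ↔ 4 * lam < |Vhat j|) :
    ((J0 \ J).card : ℝ) ≤ s0 / φ ^ 2 := by
  -- Off the support `V j = 0`, so a surviving coordinate of `Vhat` is pure error.
  have hfalse : ∀ j ∈ J0 \ J, 4 * lam ≤ |Δ j| := by
    intro j hj
    rw [mem_sdiff, hJ0, hJ, not_not] at hj
    simpa [hΔ, hj.2] using hj.1.le
  have hcount : ((J0 \ J).card : ℝ) * (4 * lam) ≤ (s0 / φ ^ 2) * (4 * lam) :=
    calc _ ≤ ∑ j, |Δ j| := card_mul_le_sum_abs _ _ hfalse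
      _ ≤ 4 * s0 * lam / φ ^ 2 := hΔ1
      _ = _ := by ring
  exact le_of_mul_le_mul_right hcount (by positivity)

theorem stmt3 {p : ℕ} (V Vhat : Fin p → ℝ)
    (J : Finset (Fin p)) (hJ : ∀ j, j ∈ J ↔ V j ≠ 0)
    (s0 : ℕ) (hs0 : J.card = s0)
    (Δ : Fin p → ℝ) (hΔ : Δ = Vhat - V)
    (lam φ : ℝ) (hlam : 0 < lam) (hφ : 0 < φ)
    (hΔ1 : ∑ j, |Δ j| ≤ 4 * s0 * lam / φ ^ 2)
    (J0 : Finset (Fin p)) (hJ0 : ∀ j, j ∈ J0 ↔ 4 * lam < |Vhat j|) :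
    ((J0 \ J).card : ℝ) ≤ s0 / φ ^ 2 :=
  stmt3_general V Vhat J hJ s0 Δ hΔ lam φ hlam hΔ1 J0 hJ0
end

section
/- Let V, V̂ ∈ ℝ^p, let J = {j : V_j ≠ 0} with |J| = s₀ ≥ 1, let Δ = V̂ − V, and let λ > 0, φ > 0. Assume ‖Δ‖₁ ≤ 4s₀λ/φ². Define Ĵ₀ = {j : |V̂_j| > 4λ} and the second thresholded set Ĵ₁ = {j ∈ Ĵ₀ : |V̂_j| > 4λ√|Ĵ₀|}. Then: (a) if J ⊆ Ĵ₀, the number of false positives satisfies |Ĵ₁ \ J| ≤ √s₀/φ²; and (b) if moreover |Ĵ₀| ≤ (1 + 1/φ²)s₀ and min_{j∈J}|V_j| > 4λ√((1 + 1/φ²)s₀) + 4s₀λ/φ², then J ⊆ Ĵ₁. -/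
open Finset

theorem stmt5 {p : ℕ} (V Vhat : Fin p → ℝ)
    (J : Finset (Fin p)) (hJ : ∀ j, j ∈ J ↔ V j ≠ 0)
    (s0 : ℕ) (hs0 : J.card = s0) (hs0' : 1 ≤ s0)
    (Δ : Fin p → ℝ) (hΔ : Δ = Vhat - V)
    (lam φ : ℝ) (hlam : 0 < lam) (hφ : 0 < φ)
    (hΔ1 : ∑ j, |Δ j| ≤ 4 * s0 * lam / φ ^ 2)
    (J0 J1 : Finset (Fin p)) (hJ0 : ∀ j, j ∈ J0 ↔ 4 * lam < |Vhat j|)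
    (hJ1 : ∀ j, j ∈ J1 ↔ j ∈ J0 ∧ 4 * lam * Real.sqrt J0.card < |Vhat j|) :
    (J ⊆ J0 → ((J1 \ J).card : ℝ) ≤ Real.sqrt s0 / φ ^ 2) ∧
    (J ⊆ J0 → (J0.card : ℝ) ≤ (1 + 1 / φ ^ 2) * s0 →
      (∀ j ∈ J, 4 * lam * Real.sqrt ((1 + 1 / φ ^ 2) * s0) + 4 * s0 * lam / φ ^ 2 < |V j|) →
      J ⊆ J1) := by
  subst hΔ
  have hs0pos : (0:ℝ) < s0 := by exact_mod_cast hs0'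
  have hsq : 0 < Real.sqrt s0 := Real.sqrt_pos.2 hs0pos
  have hmulself : Real.sqrt s0 * Real.sqrt s0 = s0 := Real.mul_self_sqrt hs0pos.le
  constructor
  · intro hsub
    have hcard : (s0 : ℝ) ≤ J0.card := by
      have := card_le_card hsub
      rw [hs0] at this
      exact_mod_cast this
    have key : ∀ j ∈ J1 \ J, 4 * lam * Real.sqrt s0 ≤ |(Vhat - V) j| := by
      intro j hj
      simp only [mem_sdiff] at hj
      have hV0 : V j = 0 := by
        by_contra h
        exact hj.2 ((hJ j).2 h)
      have hj1 := ((hJ1 j).1 hj.1).2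
      have hle : Real.sqrt s0 ≤ Real.sqrt J0.card := Real.sqrt_le_sqrt hcard
      have : |(Vhat - V) j| = |Vhat j| := by simp [hV0]
      rw [this]
      nlinarith
    have hsum : ((J1 \ J).card : ℝ) * (4 * lam * Real.sqrt s0) ≤ ∑ j, |(Vhat - V) j| :=
      calc ((J1 \ J).card : ℝ) * (4 * lam * Real.sqrt s0)
          = ∑ _j ∈ J1 \ J, (4 * lam * Real.sqrt s0) := by rw [sum_const, nsmul_eq_mul]
        _ ≤ ∑ j ∈ J1 \ J, |(Vhat - V) j| := sum_le_sum key
        _ ≤ ∑ j, |(Vhat - V) j| :=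
            sum_le_sum_of_subset_of_nonneg (subset_univ _) (fun _ _ _ => abs_nonneg _)
    have h4 : 0 < 4 * lam * Real.sqrt s0 := by positivity
    have hgoal : ((J1 \ J).card : ℝ) * (4 * lam * Real.sqrt s0)
        ≤ (Real.sqrt s0 / φ ^ 2) * (4 * lam * Real.sqrt s0) := by
      have heq : (Real.sqrt s0 / φ ^ 2) * (4 * lam * Real.sqrt s0) = 4 * s0 * lam / φ ^ 2 := by
        field_simp
        nlinarith
      rw [heq]
      exact hsum.trans hΔ1
    exact le_of_mul_le_mul_right hgoal h4
  · intro hsub hcard hmin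
    intro j hjJ
    rw [hJ1]
    refine ⟨hsub hjJ, ?_⟩
    have hδ : |(Vhat - V) j| ≤ 4 * s0 * lam / φ ^ 2 := by
      refine le_trans ?_ hΔ1
      exact single_le_sum (f := fun j => |(Vhat - V) j|) (fun _ _ => abs_nonneg _) (mem_univ j)
    have hVj := hmin j hjJ
    have htri : |V j| - |(Vhat - V) j| ≤ |Vhat j| := by
      have := abs_sub_abs_le_abs_sub (V j) (Vhat j)
      have h2 : |V j - Vhat j| = |(Vhat - V) j| := by
        rw [abs_sub_comm]; simp
      linarith
    have hsqle : Real.sqrt J0.card ≤ Real.sqrt ((1 + 1 / φ ^ 2) * s0) :=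
      Real.sqrt_le_sqrt hcard
    nlinarith
end

section
/- Let m, p ≥ 1, let A ∈ ℝ^{m×m} be positive definite, let α ≥ 0, and let θ, θ̂ ∈ ℝ^m satisfy ‖θ̂ − θ‖_A ≤ α. Let v, v̂ ∈ ℝ^p, let x*, x_t ∈ ℝ^p and z*, z_t ∈ ℝ^m. Suppose the selection rule holds: ⟨z_t, θ̂⟩ + ⟨x_t, v̂⟩ + α‖z_t‖_{A⁻¹} ≥ ⟨z*, θ̂⟩ + ⟨x*, v̂⟩ + α‖z*‖_{A⁻¹}. Then the instantaneous regret satisfies (⟨z*, θ⟩ + ⟨x*, v⟩) − (⟨z_t, θ⟩ + ⟨x_t, v⟩) ≤ 2α‖z_t‖_{A⁻¹} + α‖z*‖_{A⁻¹} + ⟨x* − x_t, v − v̂⟩. -/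
open Matrix

lemma posdef_cauchy_schwarz {m : ℕ} {B : Matrix (Fin m) (Fin m) ℝ} (hB : B.PosDef)
    (z w : Fin m → ℝ) :
    z ⬝ᵥ B.mulVec w ≤ Real.sqrt (z ⬝ᵥ B.mulVec z) * Real.sqrt (w ⬝ᵥ B.mulVec w) := by
  have hBt : Bᵀ = B := by
    rw [← conjTranspose_eq_transpose_of_trivial]; exact hB.isHermitian.eq
  have hsymm : ∀ x y : Fin m → ℝ, x ⬝ᵥ B.mulVec y = y ⬝ᵥ B.mulVec x := by
    intro x y
    rw [dotProduct_mulVec, ← mulVec_transpose, hBt, dotProduct_comm]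
  have hnn : ∀ x : Fin m → ℝ, 0 ≤ x ⬝ᵥ B.mulVec x := by
    intro x
    rcases eq_or_ne x 0 with h | h
    · simp [h]
    · exact (hB.dotProduct_mulVec_pos h).le
  set a := w ⬝ᵥ B.mulVec w with ha
  set b := z ⬝ᵥ B.mulVec w with hb
  set c := z ⬝ᵥ B.mulVec z with hc
  have hb2 : b ^ 2 ≤ c * a := by
    rcases eq_or_ne w 0 with h | h
    · simp [hb, ha, h]
    · have hapos : 0 < a := hB.dotProduct_mulVec_pos h
      have key : 0 ≤ (z - (b / a) • w) ⬝ᵥ B.mulVec (z - (b / a) • w) := hnn _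
      have expand : (z - (b / a) • w) ⬝ᵥ B.mulVec (z - (b / a) • w)
          = c - 2 * (b / a) * b + (b / a) ^ 2 * a := by
        rw [mulVec_sub, dotProduct_sub, sub_dotProduct, sub_dotProduct]
        rw [mulVec_smul, dotProduct_smul, smul_dotProduct, smul_dotProduct, dotProduct_smul]
        have := hsymm w z
        simp only [smul_eq_mul, ← hb, ← ha, ← hc, this]
        ring
      rw [expand] at key
      have hform : c - 2 * (b / a) * b + (b / a) ^ 2 * a = (c * a - b ^ 2) / a := by
        field_simp; ring
      rw [hform] at key
      have h7 := mul_nonneg key hapos.le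
      rw [div_mul_cancel₀ _ hapos.ne'] at h7
      linarith
  calc b ≤ |b| := le_abs_self b
    _ = Real.sqrt (b ^ 2) := (Real.sqrt_sq_eq_abs b).symm
    _ ≤ Real.sqrt (c * a) := Real.sqrt_le_sqrt hb2
    _ = Real.sqrt c * Real.sqrt a := Real.sqrt_mul (hnn z) a

theorem stmt9 {m p : ℕ} (hm : 1 ≤ m) (hp : 1 ≤ p)
    (A : Matrix (Fin m) (Fin m) ℝ) (hA : A.PosDef)
    (α : ℝ) (hα : 0 ≤ α)
    (θ θhat : Fin m → ℝ)
    (hest : Real.sqrt ((θhat - θ) ⬝ᵥ A.mulVec (θhat - θ)) ≤ α)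
    (v vhat : Fin p → ℝ) (xstar xt : Fin p → ℝ) (zstar zt : Fin m → ℝ)
    (hsel : zstar ⬝ᵥ θhat + xstar ⬝ᵥ vhat + α * Real.sqrt (zstar ⬝ᵥ A⁻¹.mulVec zstar) ≤
            zt ⬝ᵥ θhat + xt ⬝ᵥ vhat + α * Real.sqrt (zt ⬝ᵥ A⁻¹.mulVec zt)) :
    (zstar ⬝ᵥ θ + xstar ⬝ᵥ v) - (zt ⬝ᵥ θ + xt ⬝ᵥ v) ≤
      2 * α * Real.sqrt (zt ⬝ᵥ A⁻¹.mulVec zt) + α * Real.sqrt (zstar ⬝ᵥ A⁻¹.mulVec zstar)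
      + (xstar - xt) ⬝ᵥ (v - vhat) := by
  have hAinv : (A⁻¹).PosDef := hA.inv
  -- key: for any z, z ⬝ᵥ (θ - θhat) ≤ α * ‖z‖_{A⁻¹}, via CS with w = A⁻¹ (A (θ-θhat))
  have key : ∀ z : Fin m → ℝ, z ⬝ᵥ (θ - θhat) ≤ α * Real.sqrt (z ⬝ᵥ A⁻¹.mulVec z) := by
    intro z
    have h1 : z ⬝ᵥ (θ - θhat) = z ⬝ᵥ A⁻¹.mulVec (A.mulVec (θ - θhat)) := by
      rw [mulVec_mulVec, Matrix.nonsing_inv_mul A hA.det_pos.ne'.isUnit, one_mulVec]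
    have hcs := posdef_cauchy_schwarz hAinv z (A.mulVec (θ - θhat))
    have hAt : Aᵀ = A := by
      rw [← conjTranspose_eq_transpose_of_trivial]; exact hA.isHermitian.eq
    have h2 : (A.mulVec (θ - θhat)) ⬝ᵥ A⁻¹.mulVec (A.mulVec (θ - θhat))
        = (θ - θhat) ⬝ᵥ A.mulVec (θ - θhat) := by
      rw [mulVec_mulVec, Matrix.nonsing_inv_mul A hA.det_pos.ne'.isUnit, one_mulVec,
        dotProduct_mulVec, ← mulVec_transpose, hAt, dotProduct_comm]
    have heq : (θ - θhat) ⬝ᵥ A.mulVec (θ - θhat) = (θhat - θ) ⬝ᵥ A.mulVec (θhat - θ) := by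
      have h5 : θ - θhat = -(θhat - θ) := by abel
      rw [h5, mulVec_neg, neg_dotProduct, dotProduct_neg, neg_neg]
    rw [h2, heq] at hcs
    calc z ⬝ᵥ (θ - θhat) = z ⬝ᵥ A⁻¹.mulVec (A.mulVec (θ - θhat)) := h1
      _ ≤ Real.sqrt (z ⬝ᵥ A⁻¹.mulVec z) * Real.sqrt ((θhat - θ) ⬝ᵥ A.mulVec (θhat - θ)) := hcs
      _ ≤ Real.sqrt (z ⬝ᵥ A⁻¹.mulVec z) * α :=
          mul_le_mul_of_nonneg_left hest (Real.sqrt_nonneg _)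
      _ = α * Real.sqrt (z ⬝ᵥ A⁻¹.mulVec z) := mul_comm _ _
  have k1 := key zstar
  have k2 : zt ⬝ᵥ (θhat - θ) ≤ α * Real.sqrt (zt ⬝ᵥ A⁻¹.mulVec zt) := by
    have := key (-zt)
    have hneg : (-zt) ⬝ᵥ (θ - θhat) = zt ⬝ᵥ (θhat - θ) := by
      rw [neg_dotProduct]
      have : θ - θhat = -(θhat - θ) := by abel
      rw [this, dotProduct_neg, neg_neg]
    have hz : (-zt) ⬝ᵥ A⁻¹.mulVec (-zt) = zt ⬝ᵥ A⁻¹.mulVec zt := by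
      rw [mulVec_neg, neg_dotProduct, dotProduct_neg, neg_neg]
    rwa [hneg, hz] at this
  have hs0 : 0 ≤ Real.sqrt (zstar ⬝ᵥ A⁻¹.mulVec zstar) := Real.sqrt_nonneg _
  have e1 : zstar ⬝ᵥ (θ - θhat) = zstar ⬝ᵥ θ - zstar ⬝ᵥ θhat := by
    rw [dotProduct_sub]
  have e2 : zt ⬝ᵥ (θhat - θ) = zt ⬝ᵥ θhat - zt ⬝ᵥ θ := by rw [dotProduct_sub]
  have e3 : (xstar - xt) ⬝ᵥ (v - vhat)
      = xstar ⬝ᵥ v - xt ⬝ᵥ v - xstar ⬝ᵥ vhat + xt ⬝ᵥ vhat := by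
    rw [sub_dotProduct, dotProduct_sub, dotProduct_sub]; ring
  nlinarith [mul_nonneg hα hs0]
end

section
/- Let m ≥ 1, λ > 0, and let z₁,…,z_T ∈ ℝ^m. Define A₀ = λ·I and A_t = A_{t−1} + z_t z_tᵀ for 1 ≤ t ≤ T. Then Σ_{t=1}^T min(1, z_tᵀ A_{t−1}⁻¹ z_t) ≤ 2·log(det(A_T)/det(A₀)). -/
open Matrix Finset

private lemma min_le_two_log {q : ℝ} (hq : 0 ≤ q) : min 1 q ≤ 2 * Real.log (1 + q) := by
  have hpos : (0:ℝ) < 1 + q := by linarith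
  have hlog : 1 - (1 + q)⁻¹ ≤ Real.log (1 + q) := Real.one_sub_inv_le_log_of_pos hpos
  have key : min 1 q ≤ 2 * (1 - (1 + q)⁻¹) := by
    have hinv : (1 + q)⁻¹ * (1 + q) = 1 := inv_mul_cancel₀ hpos.ne'
    rcases le_total q 1 with h | h
    · rw [min_eq_right h]
      have : q * (1 + q) ≤ 2 * ((1 - (1 + q)⁻¹) * (1 + q)) := by
        rw [sub_mul, one_mul, inv_mul_cancel₀ hpos.ne']
        nlinarith
      nlinarith [mul_le_mul_of_nonneg_right (le_of_eq (rfl : q = q)) hq]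
    · rw [min_eq_left h]
      have : 1 * (1 + q) ≤ 2 * ((1 - (1 + q)⁻¹) * (1 + q)) := by
        rw [sub_mul, one_mul, inv_mul_cancel₀ hpos.ne']
        nlinarith
      nlinarith
  linarith

theorem stmt12 {m T : ℕ} (hm : 1 ≤ m) (lam : ℝ) (hlam : 0 < lam)
    (z : Fin T → Fin m → ℝ) (A : ℕ → Matrix (Fin m) (Fin m) ℝ)
    (hA0 : A 0 = lam • (1 : Matrix (Fin m) (Fin m) ℝ))
    (hAt : ∀ t : Fin T, A ((t : ℕ) + 1) = A t + vecMulVec (z t) (z t)) :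
    ∑ t : Fin T, min 1 (z t ⬝ᵥ (A t)⁻¹.mulVec (z t)) ≤
      2 * Real.log ((A T).det / (A 0).det) := by
  -- rank-one matrices are PSD
  have hzsemi : ∀ t : Fin T, (vecMulVec (z t) (z t)).PosSemidef := by
    intro t
    rw [posSemidef_iff_dotProduct_mulVec]
    constructor
    · ext i j
      simp [vecMulVec, conjTranspose_apply, mul_comm]
    · intro x
      have hmv : vecMulVec (z t) (z t) *ᵥ x = (z t ⬝ᵥ x) • (z t) := by
        ext i
        simp [vecMulVec, mulVec, dotProduct, Finset.mul_sum, mul_comm, mul_assoc, mul_left_comm]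
      rw [hmv]
      have : star x ⬝ᵥ (z t ⬝ᵥ x) • z t = (z t ⬝ᵥ x) * (x ⬝ᵥ z t) := by
        simp [dotProduct_smul, star_trivial, mul_comm]
      rw [this, dotProduct_comm]
      exact mul_self_nonneg _
  -- positive definiteness
  have hpos : ∀ t : ℕ, t ≤ T → (A t).PosDef := by
    intro t
    induction t with
    | zero =>
      intro _
      rw [hA0, smul_one_eq_diagonal]
      exact Matrix.PosDef.diagonal fun _ => hlam
    | succ n ih =>
      intro h
      have hn : n < T := h
      have := hAt ⟨n, hn⟩
      simp only [Fin.val_mk] at this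
      rw [this]
      exact (ih (le_of_lt hn)).add_posSemidef (hzsemi ⟨n, hn⟩)
  set q : Fin T → ℝ := fun t => z t ⬝ᵥ (A t)⁻¹ *ᵥ z t with hq
  have hqnonneg : ∀ t : Fin T, 0 ≤ q t := by
    intro t
    have h := ((hpos t (le_of_lt t.isLt)).inv).posSemidef.dotProduct_mulVec_nonneg (z t)
    simpa [star_trivial] using h
  -- determinant recursion
  have hdet : ∀ t : Fin T, (A ((t:ℕ) + 1)).det = (A t).det * (1 + q t) := by
    intro t
    have hApd := hpos t (le_of_lt t.isLt)
    have hu : IsUnit (A (t:ℕ)).det := hApd.det_pos.ne'.isUnit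
    rw [hAt t, vecMulVec_eq Unit, det_add_replicateCol_mul_replicateRow hu]
    congr 1
    rw [det_unique, Matrix.add_apply, Matrix.one_apply_eq, ← Matrix.replicateRow_vecMul,
      Matrix.replicateRow_mul_replicateCol_apply, ← Matrix.dotProduct_mulVec]
  have hdetpos : ∀ t : ℕ, t ≤ T → 0 < (A t).det := fun t ht => (hpos t ht).det_pos
  -- log recursion
  have hlogstep : ∀ t : Fin T,
      Real.log ((A ((t:ℕ)+1)).det) - Real.log ((A t).det) = Real.log (1 + q t) := by
    intro t
    rw [hdet t, Real.log_mul (hdetpos t (le_of_lt t.isLt)).ne' (by have := hqnonneg t; positivity)]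
    ring
  calc ∑ t : Fin T, min 1 (z t ⬝ᵥ (A t)⁻¹.mulVec (z t))
      ≤ ∑ t : Fin T, 2 * Real.log (1 + q t) :=
        Finset.sum_le_sum fun t _ => min_le_two_log (hqnonneg t)
    _ = 2 * ∑ t : Fin T, (Real.log ((A ((t:ℕ)+1)).det) - Real.log ((A t).det)) := by
        rw [Finset.mul_sum]
        exact Finset.sum_congr rfl fun t _ => by rw [hlogstep t]
    _ = 2 * (Real.log ((A T).det) - Real.log ((A 0).det)) := by
        congr 1
        rw [Fin.sum_univ_eq_sum_range (fun i => Real.log ((A (i+1)).det) - Real.log ((A i).det))]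
        exact Finset.sum_range_sub (fun i => Real.log ((A i).det)) T
    _ = 2 * Real.log ((A T).det / (A 0).det) := by
        rw [Real.log_div (hdetpos T le_rfl).ne' (hdetpos 0 (Nat.zero_le _)).ne']
end
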